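/- arXiv:2408.06989 — 3 statements merged into one kernel-verified Lean document; each statement's English description precedes it below -/
import Mathlib

section
/- Let n ≥ 1 and let Ω ⊆ ℝⁿ be an open set that is Riesz subcritical, i.e. ess sup_{x ∈ Ω} ∫_1^∞ |Ω ∩ B(x,r)| r^{-(n+1)} dr < ∞, where |·| denotes Lebesgue measure. Then the measure-theoretic inradius of Ω is finite: ρ_m(Ω) < ∞. -/
open MeasureTheory Real ENNReal

/-- The measure-theoretic inradius
`ρ_m(Ω) = sup{R > 0 : ∀ ε > 0, ∃ x ∈ ℝⁿ, |B(x,R) ∩ Ωᶜ| < ε}`, as an element of `[0,∞]`. -/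
noncomputable def rhoM (n : ℕ) (Ω : Set (EuclideanSpace ℝ (Fin n))) : ℝ≥0∞ :=
  ⨆ (R : ℝ) (_ : 0 < R ∧ ∀ ε > (0 : ℝ), ∃ x : EuclideanSpace ℝ (Fin n),
      volume (Metric.ball x R ∩ Ωᶜ) < ENNReal.ofReal ε),
    ENNReal.ofReal R

/-- If `Ω ⊆ ℝⁿ` is Riesz subcritical, then its measure-theoretic inradius is finite. -/
theorem rhoM_lt_top_of_riesz_subcritical (n : ℕ) (hn : 1 ≤ n)
    (Ω : Set (EuclideanSpace ℝ (Fin n))) (hΩ : IsOpen Ω)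
    (hsub : essSup
        (fun x : EuclideanSpace ℝ (Fin n) =>
          ∫⁻ r in Set.Ioi (1 : ℝ),
            volume (Ω ∩ Metric.ball x r) / ENNReal.ofReal (r ^ (n + 1)))
        (volume.restrict Ω) < ⊤) :
    rhoM n Ω < ⊤ := by
  by_contra htop
  rw [not_lt, top_le_iff] at htop
  haveI : Nontrivial (EuclideanSpace ℝ (Fin n)) :=
    Module.nontrivial_of_finrank_pos
      (by rw [finrank_euclideanSpace_fin]; omega)
  set f : EuclideanSpace ℝ (Fin n) → ℝ≥0∞ := fun x =>
    ∫⁻ r in Set.Ioi (1 : ℝ),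
      volume (Ω ∩ Metric.ball x r) / ENNReal.ofReal (r ^ (n + 1)) with hf
  set ω : ℝ≥0∞ := volume (Metric.ball (0 : EuclideanSpace ℝ (Fin n)) 1) with hωdef
  have hω_pos : 0 < ω := Metric.measure_ball_pos _ _ one_pos
  have hω_top : ω ≠ ⊤ := measure_ball_lt_top.ne
  have hhalf_pos : 0 < ω / 2 := ENNReal.div_pos hω_pos.ne' (by norm_num)
  have hhalf_top : ω / 2 ≠ ⊤ := by
    exact (ENNReal.div_lt_top hω_top (by norm_num)).ne
  -- main claim
  have key : ∀ T : ℝ, (ω / 2) * ENNReal.ofReal T ≤ essSup f (volume.restrict Ω) := by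
    intro T
    obtain ⟨R, hPR, hRM⟩ : ∃ R : ℝ, (0 < R ∧ ∀ ε > (0 : ℝ),
        ∃ x : EuclideanSpace ℝ (Fin n),
          volume (Metric.ball x R ∩ Ωᶜ) < ENNReal.ofReal ε) ∧
        max 2 (2 * Real.exp T) < R := by
      by_contra hcon
      push_neg at hcon
      have h1 : rhoM n Ω ≤ ENNReal.ofReal (max 2 (2 * Real.exp T)) := by
        refine iSup₂_le fun R hR => ENNReal.ofReal_le_ofReal (hcon R hR)
      rw [htop, top_le_iff] at h1
      exact ENNReal.ofReal_ne_top h1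
    have hR2 : (2 : ℝ) < R := lt_of_le_of_lt (le_max_left _ _) hRM
    have hRT : 2 * Real.exp T < R := lt_of_le_of_lt (le_max_right _ _) hRM
    have hR2pos : (0 : ℝ) < R / 2 := by linarith
    have hR2one : (1 : ℝ) ≤ R / 2 := by linarith
    -- get the almost-full ball
    obtain ⟨x₀, hx₀⟩ := hPR.2 ((ω / 2).toReal)
      (ENNReal.toReal_pos hhalf_pos.ne' hhalf_top)
    rw [ENNReal.ofReal_toReal hhalf_top] at hx₀
    -- T ≤ log (R/2)
    have hTlog : T ≤ Real.log (R / 2) := by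
      rw [Real.le_log_iff_exp_le hR2pos]
      linarith
    have hc_le : (ω / 2) * ENNReal.ofReal T ≤ (ω / 2) * ENNReal.ofReal (Real.log (R / 2)) :=
      mul_le_mul_right (ENNReal.ofReal_le_ofReal hTlog) _
    refine hc_le.trans ?_
    set c : ℝ≥0∞ := (ω / 2) * ENNReal.ofReal (Real.log (R / 2)) with hcdef
    -- volume of balls
    have hvol : ∀ (y : EuclideanSpace ℝ (Fin n)) (r : ℝ), 0 ≤ r →
        volume (Metric.ball y r) = ENNReal.ofReal (r ^ n) * ω := by
      intro y r hr
      rw [Measure.addHaar_ball volume y hr, finrank_euclideanSpace_fin]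
    -- positive measure of the half-ball inside Ω
    have hSpos : 0 < (volume.restrict Ω) (Metric.ball x₀ (R / 2)) := by
      rw [Measure.restrict_apply measurableSet_ball]
      rcases eq_or_ne (volume (Metric.ball x₀ (R / 2) ∩ Ω)) 0 with h0 | h0
      · exfalso
        have hsplit : volume (Metric.ball x₀ (R / 2) ∩ Ω)
              + volume (Metric.ball x₀ (R / 2) \ Ω) = volume (Metric.ball x₀ (R / 2)) :=
          measure_inter_add_diff _ hΩ.measurableSet
        have hmono : volume (Metric.ball x₀ (R / 2) \ Ω) ≤ volume (Metric.ball x₀ R ∩ Ωᶜ) := by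
          refine measure_mono ?_
          rw [Set.diff_eq]
          exact Set.inter_subset_inter_left _ (Metric.ball_subset_ball (by linarith))
        have hge : ω ≤ volume (Metric.ball x₀ (R / 2)) := by
          rw [hvol x₀ (R / 2) hR2pos.le]
          refine le_mul_of_one_le_left zero_le ?_
          rw [← ENNReal.ofReal_one]
          exact ENNReal.ofReal_le_ofReal (one_le_pow₀ hR2one)
        have : ω < ω / 2 := by
          calc ω ≤ volume (Metric.ball x₀ (R / 2)) := hge
            _ = volume (Metric.ball x₀ (R / 2) ∩ Ω)
                + volume (Metric.ball x₀ (R / 2) \ Ω) := hsplit.symm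
            _ = volume (Metric.ball x₀ (R / 2) \ Ω) := by rw [h0, zero_add]
            _ ≤ volume (Metric.ball x₀ R ∩ Ωᶜ) := hmono
            _ < ω / 2 := hx₀
        exact absurd this (not_lt.mpr (ENNReal.half_le_self))
      · exact pos_iff_ne_zero.mpr h0
    -- pointwise lower bound on the half-ball
    have hpt : ∀ y ∈ Metric.ball x₀ (R / 2), c ≤ f y := by
      intro y hy
      have hy' : dist y x₀ < R / 2 := Metric.mem_ball.mp hy
      have hvolΩ : ∀ r ∈ Set.Ioo (1 : ℝ) (R / 2),
          ENNReal.ofReal (r ^ n) * (ω / 2) ≤ volume (Ω ∩ Metric.ball y r) := by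
        intro r hr
        have hr0 : (0 : ℝ) < r := lt_trans one_pos hr.1
        have hball : Metric.ball y r ⊆ Metric.ball x₀ R :=
          Metric.ball_subset_ball' (by linarith [hr.2])
        have hsplit : volume (Metric.ball y r ∩ Ω) + volume (Metric.ball y r \ Ω)
            = volume (Metric.ball y r) := measure_inter_add_diff _ hΩ.measurableSet
        have hmono : volume (Metric.ball y r \ Ω) ≤ volume (Metric.ball x₀ R ∩ Ωᶜ) := by
          refine measure_mono ?_
          rw [Set.diff_eq]
          exact Set.inter_subset_inter_left _ hball
        have h1 : ENNReal.ofReal (r ^ n) * ω ≤ volume (Metric.ball y r ∩ Ω) + ω / 2 := by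
          calc ENNReal.ofReal (r ^ n) * ω = volume (Metric.ball y r) := (hvol y r hr0.le).symm
            _ = volume (Metric.ball y r ∩ Ω) + volume (Metric.ball y r \ Ω) := hsplit.symm
            _ ≤ volume (Metric.ball y r ∩ Ω) + ω / 2 :=
                add_le_add_right (hmono.trans hx₀.le) _
        have hone : (1 : ℝ≥0∞) ≤ ENNReal.ofReal (r ^ n) := by
          rw [← ENNReal.ofReal_one]
          exact ENNReal.ofReal_le_ofReal (one_le_pow₀ hr.1.le)
        have h2 : ENNReal.ofReal (r ^ n) * (ω / 2) + ω / 2 ≤ ENNReal.ofReal (r ^ n) * ω := by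
          calc ENNReal.ofReal (r ^ n) * (ω / 2) + ω / 2
              ≤ ENNReal.ofReal (r ^ n) * (ω / 2) + ENNReal.ofReal (r ^ n) * (ω / 2) :=
                add_le_add_right (le_mul_of_one_le_left zero_le hone) _
            _ = ENNReal.ofReal (r ^ n) * (ω / 2 + ω / 2) := (mul_add _ _ _).symm
            _ = ENNReal.ofReal (r ^ n) * ω := by rw [ENNReal.add_halves]
        have h3 := h2.trans h1
        rw [ENNReal.add_le_add_iff_right hhalf_top] at h3
        rw [Set.inter_comm]
        exact h3
      have hmeas : MeasurableSet (Set.Ioo (1 : ℝ) (R / 2)) := measurableSet_Ioo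
      have hint : (∫⁻ r in Set.Ioo (1 : ℝ) (R / 2), (ω / 2) * ENNReal.ofReal r⁻¹) ≤ f y := by
        have hstep : (∫⁻ r in Set.Ioo (1 : ℝ) (R / 2),
            volume (Ω ∩ Metric.ball y r) / ENNReal.ofReal (r ^ (n + 1))) ≤ f y :=
          lintegral_mono_set Set.Ioo_subset_Ioi_self
        refine le_trans ?_ hstep
        refine setLIntegral_mono' hmeas ?_
        intro r hr
        have hr0 : (0 : ℝ) < r := lt_trans one_pos hr.1
        have hrpow : (0 : ℝ) < r ^ (n + 1) := pow_pos hr0 _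
        have hdiv : ENNReal.ofReal (r ^ n) * (ω / 2) / ENNReal.ofReal (r ^ (n + 1))
            = (ω / 2) * ENNReal.ofReal r⁻¹ := by
          rw [mul_comm (ENNReal.ofReal (r ^ n)) (ω / 2), mul_div_assoc,
            ← ENNReal.ofReal_div_of_pos hrpow]
          congr 1
          rw [pow_succ]
          field_simp
        calc (ω / 2) * ENNReal.ofReal r⁻¹
            = ENNReal.ofReal (r ^ n) * (ω / 2) / ENNReal.ofReal (r ^ (n + 1)) := hdiv.symm
          _ ≤ volume (Ω ∩ Metric.ball y r) / ENNReal.ofReal (r ^ (n + 1)) :=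
              ENNReal.div_le_div_right (hvolΩ r hr) _
      have hIcc : IntegrableOn (fun r : ℝ => r⁻¹) (Set.Ioo (1 : ℝ) (R / 2)) := by
        refine IntegrableOn.mono_set ?_ Set.Ioo_subset_Icc_self
        refine ContinuousOn.integrableOn_Icc ?_
        refine ContinuousOn.mono continuousOn_inv₀ ?_
        intro r hr
        simp only [Set.mem_compl_iff, Set.mem_singleton_iff]
        have : (1 : ℝ) ≤ r := hr.1
        intro h0
        rw [h0] at this
        linarith
      have h4 : (∫⁻ r in Set.Ioo (1 : ℝ) (R / 2), ENNReal.ofReal r⁻¹)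
          = ENNReal.ofReal (∫ r in Set.Ioo (1 : ℝ) (R / 2), r⁻¹) := by
        rw [ofReal_integral_eq_lintegral_ofReal hIcc ?_]
        filter_upwards [self_mem_ae_restrict hmeas] with r hr
        exact inv_nonneg.mpr (lt_trans one_pos hr.1).le
      have h5 : (∫ r in Set.Ioo (1 : ℝ) (R / 2), r⁻¹) = Real.log (R / 2) := by
        rw [← integral_Ioc_eq_integral_Ioo,
          ← intervalIntegral.integral_of_le (by linarith : (1 : ℝ) ≤ R / 2),
          integral_inv_of_pos one_pos hR2pos, div_one]
      have hcalc : (∫⁻ r in Set.Ioo (1 : ℝ) (R / 2), (ω / 2) * ENNReal.ofReal r⁻¹) = c := by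
        rw [lintegral_const_mul _ (measurable_inv.ennreal_ofReal), h4, h5]
      rw [← hcalc]
      exact hint
    -- conclude via essSup
    by_contra hlt
    push_neg at hlt
    have hae := ae_lt_of_essSup_lt hlt
    have : (volume.restrict Ω) (Metric.ball x₀ (R / 2)) = 0 := by
      refine measure_mono_null ?_ hae
      intro y hy
      simp only [Set.mem_setOf_eq, Set.mem_compl_iff]
      exact not_lt.mpr (hpt y hy)
    exact absurd this hSpos.ne'
  -- derive contradiction
  set a := essSup f (volume.restrict Ω) with ha
  have hdiv : a / (ω / 2) < ⊤ := ENNReal.div_lt_top hsub.ne hhalf_pos.ne'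
  set T : ℝ := (a / (ω / 2)).toReal + 1 with hT
  have h1 : a / (ω / 2) < ENNReal.ofReal T := by
    rw [hT]
    calc a / (ω / 2) = ENNReal.ofReal ((a / (ω / 2)).toReal) :=
          (ENNReal.ofReal_toReal hdiv.ne).symm
      _ < ENNReal.ofReal ((a / (ω / 2)).toReal + 1) := by
          rw [ENNReal.ofReal_lt_ofReal_iff (by positivity)]
          linarith
  have h2 : a < (ω / 2) * ENNReal.ofReal T := by
    rw [mul_comm]
    exact (ENNReal.div_lt_iff (Or.inl hhalf_pos.ne') (Or.inl hhalf_top)).mp h1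
  exact absurd (key T) (not_le.mpr h2)
end

section
/- Let n ≥ 1 and let Ω ⊆ ℝⁿ be an open set. For α ∈ (0,1) define ρ_{m,α}(Ω) = sup{R > 0 : ∃ x ∈ ℝⁿ such that |B(x,R) ∩ Ωᶜ| ≤ α |B(x,R)|}, and define the measure-theoretic inradius ρ_m(Ω) = sup{R > 0 : ∀ ε > 0, ∃ x ∈ ℝⁿ such that |B(x,R) ∩ Ωᶜ| < ε}. Then ρ_m(Ω) = inf_{0<α<1} ρ_{m,α}(Ω). -/
open MeasureTheory Real ENNReal

/-- The Maz'ya-Shubin measure-theoretic inradius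
`ρ_{m,α}(Ω) = sup{R > 0 : ∃ x, |B(x,R) ∩ Ωᶜ| ≤ α |B(x,R)|}`, as an element of `[0,∞]`. -/
noncomputable def rhoMAlpha (n : ℕ) (α : ℝ) (Ω : Set (EuclideanSpace ℝ (Fin n))) : ℝ≥0∞ :=
  ⨆ (R : ℝ) (_ : 0 < R ∧ ∃ x : EuclideanSpace ℝ (Fin n),
      volume (Metric.ball x R ∩ Ωᶜ) ≤ ENNReal.ofReal α * volume (Metric.ball x R)),
    ENNReal.ofReal R

open Metric Set in
private lemma ball_double {n : ℕ} (hn : 1 ≤ n) {r : ℝ} (hr : 0 ≤ r) :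
    volume (ball (0:EuclideanSpace ℝ (Fin n)) (2*r))
      = (2:ℝ≥0∞)^n * volume (ball (0:EuclideanSpace ℝ (Fin n)) r) := by
  haveI : Nontrivial (EuclideanSpace ℝ (Fin n)) :=
    Module.nontrivial_of_finrank_pos (R := ℝ)
      (by rw [finrank_euclideanSpace_fin]; omega)
  rw [Measure.addHaar_ball volume _ (by linarith : (0:ℝ) ≤ 2*r),
    Measure.addHaar_ball volume _ hr, finrank_euclideanSpace_fin,
    mul_pow, ENNReal.ofReal_mul (by positivity), ← mul_assoc,
    ENNReal.ofReal_pow (by norm_num)]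
  norm_num

open Metric Set in
private lemma double_int {n : ℕ} {S : Set (EuclideanSpace ℝ (Fin n))} (hS : MeasurableSet S)
    {R ρ : ℝ} (x : EuclideanSpace ℝ (Fin n)) :
    ∫⁻ y in ball x ρ, volume (S ∩ ball y R)
      ≤ volume (S ∩ ball x (ρ + R)) * volume (ball (0:EuclideanSpace ℝ (Fin n)) R) := by
  set f : EuclideanSpace ℝ (Fin n) → EuclideanSpace ℝ (Fin n) → ℝ≥0∞ := fun y z =>
    (ball x ρ).indicator 1 y * (S.indicator 1 z * (ball z R).indicator 1 y) with hf
  have hsym : ∀ y z : EuclideanSpace ℝ (Fin n),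
      (ball z R).indicator (1 : EuclideanSpace ℝ (Fin n) → ℝ≥0∞) y = (ball y R).indicator 1 z := by
    intro y z
    by_cases h : z ∈ ball y R
    · have h' : y ∈ ball z R := mem_ball_comm.mp h
      simp [h, h']
    · have h' : y ∉ ball z R := fun hh => h (mem_ball_comm.mp hh)
      simp [h, h']
  have hmeas : AEMeasurable (Function.uncurry f) (volume.prod volume) := by
    have hU : MeasurableSet {p : EuclideanSpace ℝ (Fin n) × EuclideanSpace ℝ (Fin n) |
        dist p.1 p.2 < R} :=
      (isOpen_lt (continuous_fst.dist continuous_snd) continuous_const).measurableSet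
    have heq : Function.uncurry f = fun p : EuclideanSpace ℝ (Fin n) × EuclideanSpace ℝ (Fin n) =>
        (ball x ρ).indicator 1 p.1 *
          (S.indicator 1 p.2 * {p : EuclideanSpace ℝ (Fin n) × EuclideanSpace ℝ (Fin n) |
            dist p.1 p.2 < R}.indicator 1 p) := by
      funext p
      by_cases h : dist p.1 p.2 < R <;>
        simp [Function.uncurry, hf, Set.indicator_apply, mem_ball, h]
    rw [heq]
    exact (((measurable_const.indicator measurableSet_ball).comp measurable_fst).mul
      (((measurable_const.indicator hS).comp measurable_snd).mul
        (measurable_const.indicator hU))).aemeasurable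
  have h1 : ∀ y, ∫⁻ z, f y z = (ball x ρ).indicator (fun y => volume (S ∩ ball y R)) y := by
    intro y
    have hne : (ball x ρ).indicator (1 : EuclideanSpace ℝ (Fin n) → ℝ≥0∞) y ≠ ⊤ := by
      by_cases hy : y ∈ ball x ρ <;> simp [hy]
    calc ∫⁻ z, f y z
        = (ball x ρ).indicator 1 y * ∫⁻ z, (S ∩ ball y R).indicator 1 z := by
          rw [← lintegral_const_mul' _ _ hne]
          congr 1; funext z
          rw [Set.inter_indicator_one, Pi.mul_apply, ← hsym y z]
      _ = (ball x ρ).indicator 1 y * volume (S ∩ ball y R) := by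
          rw [lintegral_indicator_one (hS.inter measurableSet_ball)]
      _ = (ball x ρ).indicator (fun y => volume (S ∩ ball y R)) y := by
          by_cases hy : y ∈ ball x ρ <;> simp [hy]
  have h2 : ∀ z, ∫⁻ y, f y z = S.indicator (fun z => volume (ball x ρ ∩ ball z R)) z := by
    intro z
    have hne : S.indicator (1 : EuclideanSpace ℝ (Fin n) → ℝ≥0∞) z ≠ ⊤ := by
      by_cases hz : z ∈ S <;> simp [hz]
    calc ∫⁻ y, f y z
        = S.indicator 1 z * ∫⁻ y, (ball x ρ ∩ ball z R).indicator 1 y := by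
          rw [← lintegral_const_mul' _ _ hne]
          congr 1; funext y
          rw [Set.inter_indicator_one, Pi.mul_apply]
          simp only [hf]; ring
      _ = S.indicator 1 z * volume (ball x ρ ∩ ball z R) := by
          rw [lintegral_indicator_one (measurableSet_ball.inter measurableSet_ball)]
      _ = S.indicator (fun z => volume (ball x ρ ∩ ball z R)) z := by
          by_cases hz : z ∈ S <;> simp [hz]
  have swap := lintegral_lintegral_swap hmeas
  have hleft : ∫⁻ y, ∫⁻ z, f y z = ∫⁻ y in ball x ρ, volume (S ∩ ball y R) := by
    simp only [h1]
    exact lintegral_indicator measurableSet_ball _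
  have hright : ∫⁻ z, ∫⁻ y, f y z
      ≤ volume (S ∩ ball x (ρ + R)) * volume (ball (0:EuclideanSpace ℝ (Fin n)) R) := by
    simp only [h2]
    calc ∫⁻ z, S.indicator (fun z => volume (ball x ρ ∩ ball z R)) z
        ≤ ∫⁻ z, (S ∩ ball x (ρ + R)).indicator
            (fun _ => volume (ball (0:EuclideanSpace ℝ (Fin n)) R)) z := by
          apply lintegral_mono
          intro z
          by_cases hz : z ∈ S
          · by_cases hz' : z ∈ ball x (ρ + R)
            · simp only [Set.indicator_of_mem hz, Set.indicator_of_mem (mem_inter hz hz')]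
              calc volume (ball x ρ ∩ ball z R) ≤ volume (ball z R) :=
                    measure_mono inter_subset_right
                _ = volume (ball (0:EuclideanSpace ℝ (Fin n)) R) :=
                    Measure.addHaar_ball_center volume z R
            · have hemp : ball x ρ ∩ ball z R = ∅ := by
                ext y
                simp only [mem_inter_iff, mem_ball, mem_empty_iff_false, iff_false, not_and]
                intro hyx hyz
                exact hz' (mem_ball.2 (by
                  calc dist z x ≤ dist z y + dist y x := dist_triangle _ _ _
                    _ < R + ρ := by rw [dist_comm z y]; exact add_lt_add hyz hyx
                    _ = ρ + R := add_comm _ _))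
              simp [Set.indicator_of_mem hz, hemp]
          · simp [Set.indicator_of_notMem hz]
      _ = volume (ball (0:EuclideanSpace ℝ (Fin n)) R) * volume (S ∩ ball x (ρ + R)) :=
          lintegral_indicator_const (hS.inter measurableSet_ball) _
      _ = volume (S ∩ ball x (ρ + R)) * volume (ball (0:EuclideanSpace ℝ (Fin n)) R) :=
          mul_comm _ _
  rw [← hleft, swap]
  exact hright

open Metric Set in
private lemma key_density {n : ℕ} (hn : 1 ≤ n) {S : Set (EuclideanSpace ℝ (Fin n))}
    (hS : MeasurableSet S) {R ε α R' : ℝ} (hR : 0 < R)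
    (hsmall : ENNReal.ofReal α *
        ((2:ℝ≥0∞)^n * volume (ball (0:EuclideanSpace ℝ (Fin n)) R)) < ENNReal.ofReal ε)
    (hRR' : R < R') {x : EuclideanSpace ℝ (Fin n)}
    (hx : volume (ball x R' ∩ S) ≤ ENNReal.ofReal α * volume (ball x R')) :
    ∃ y, volume (ball y R ∩ S) < ENNReal.ofReal ε := by
  have hcen : ∀ (z : EuclideanSpace ℝ (Fin n)) (r : ℝ),
      volume (ball z r) = volume (ball (0:EuclideanSpace ℝ (Fin n)) r) :=
    fun z r => Measure.addHaar_ball_center volume z r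
  by_cases h2 : R' ≤ 2*R
  · refine ⟨x, ?_⟩
    calc volume (ball x R ∩ S) ≤ volume (ball x R' ∩ S) :=
          measure_mono (inter_subset_inter_left _ (ball_subset_ball hRR'.le))
      _ ≤ ENNReal.ofReal α * volume (ball x R') := hx
      _ ≤ ENNReal.ofReal α * volume (ball (0:EuclideanSpace ℝ (Fin n)) (2*R)) := by
          rw [hcen x R']
          exact mul_le_mul_right (measure_mono (ball_subset_ball h2)) _
      _ = ENNReal.ofReal α *
            ((2:ℝ≥0∞)^n * volume (ball (0:EuclideanSpace ℝ (Fin n)) R)) := by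
          rw [ball_double hn hR.le]
      _ < ENNReal.ofReal ε := hsmall
  · push_neg at h2
    by_contra hcon
    push_neg at hcon
    set ρ := R' - R with hρdef
    have hρR : R < ρ := by simp only [hρdef]; linarith
    have hρ0 : 0 < ρ := hR.trans hρR
    have hR'ρ : R' ≤ 2*ρ := by simp only [hρdef]; linarith
    -- lower bound for the averaged integral
    have hlow : ENNReal.ofReal ε * volume (ball x ρ)
        ≤ ∫⁻ y in ball x ρ, volume (S ∩ ball y R) := by
      calc ENNReal.ofReal ε * volume (ball x ρ)
          = ∫⁻ _ in ball x ρ, ENNReal.ofReal ε := (setLIntegral_const _ _).symm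
        _ ≤ ∫⁻ y in ball x ρ, volume (S ∩ ball y R) := by
            apply lintegral_mono
            intro y
            simpa [inter_comm] using hcon y
    -- upper bound
    have hup : ∫⁻ y in ball x ρ, volume (S ∩ ball y R)
        ≤ (ENNReal.ofReal α *
            ((2:ℝ≥0∞)^n * volume (ball (0:EuclideanSpace ℝ (Fin n)) R))) *
          volume (ball x ρ) := by
      have hsum : ρ + R = R' := by simp [hρdef]
      calc ∫⁻ y in ball x ρ, volume (S ∩ ball y R)
          ≤ volume (S ∩ ball x (ρ + R)) *
              volume (ball (0:EuclideanSpace ℝ (Fin n)) R) := double_int hS x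
        _ ≤ (ENNReal.ofReal α * volume (ball x R')) *
              volume (ball (0:EuclideanSpace ℝ (Fin n)) R) := by
            rw [hsum, inter_comm]
            exact mul_le_mul_left hx _
        _ ≤ (ENNReal.ofReal α * ((2:ℝ≥0∞)^n * volume (ball x ρ))) *
              volume (ball (0:EuclideanSpace ℝ (Fin n)) R) := by
            refine mul_le_mul_left (mul_le_mul_right ?_ _) _
            rw [hcen x R', hcen x ρ, ← ball_double hn hρ0.le]
            exact measure_mono (ball_subset_ball hR'ρ)
        _ = (ENNReal.ofReal α *
              ((2:ℝ≥0∞)^n * volume (ball (0:EuclideanSpace ℝ (Fin n)) R))) *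
            volume (ball x ρ) := by ring
    have hv0 : volume (ball x ρ) ≠ 0 := (measure_ball_pos volume x hρ0).ne'
    have hvt : volume (ball x ρ) ≠ ⊤ := measure_ball_lt_top.ne
    have := (ENNReal.mul_le_mul_iff_left hv0 hvt).mp (hlow.trans hup)
    exact absurd (this.trans_lt hsmall) (lt_irrefl _)

/-- `ρ_m(Ω) = inf_{0<α<1} ρ_{m,α}(Ω)`. -/
theorem rhoM_eq_iInf_rhoMAlpha (n : ℕ) (hn : 1 ≤ n)
    (Ω : Set (EuclideanSpace ℝ (Fin n))) (hΩ : IsOpen Ω) :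
    rhoM n Ω = ⨅ (α : ℝ) (_ : α ∈ Set.Ioo (0 : ℝ) 1), rhoMAlpha n α Ω := by
  have hcen : ∀ (z : EuclideanSpace ℝ (Fin n)) (r : ℝ),
      volume (Metric.ball z r) = volume (Metric.ball (0:EuclideanSpace ℝ (Fin n)) r) :=
    fun z r => Measure.addHaar_ball_center volume z r
  apply le_antisymm
  · -- rhoM ≤ inf
    refine le_iInf₂ fun α hα => ?_
    refine iSup₂_le fun R hR => ?_
    obtain ⟨hR0, hprop⟩ := hR
    have hc0 : volume (Metric.ball (0:EuclideanSpace ℝ (Fin n)) R) ≠ 0 :=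
      (Metric.measure_ball_pos volume _ hR0).ne'
    have hct : volume (Metric.ball (0:EuclideanSpace ℝ (Fin n)) R) ≠ ⊤ :=
      measure_ball_lt_top.ne
    obtain ⟨x, hx⟩ := hprop (α * (volume (Metric.ball (0:EuclideanSpace ℝ (Fin n)) R)).toReal)
      (mul_pos hα.1 (toReal_pos hc0 hct))
    refine le_iSup₂ (f := fun R (_ : 0 < R ∧ ∃ x : EuclideanSpace ℝ (Fin n),
      volume (Metric.ball x R ∩ Ωᶜ) ≤ ENNReal.ofReal α * volume (Metric.ball x R)) =>
        ENNReal.ofReal R) R ⟨hR0, x, ?_⟩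
    calc volume (Metric.ball x R ∩ Ωᶜ)
        ≤ ENNReal.ofReal (α * (volume (Metric.ball (0:EuclideanSpace ℝ (Fin n)) R)).toReal) :=
          hx.le
      _ = ENNReal.ofReal α * volume (Metric.ball (0:EuclideanSpace ℝ (Fin n)) R) := by
          rw [ENNReal.ofReal_mul hα.1.le, ENNReal.ofReal_toReal hct]
      _ = ENNReal.ofReal α * volume (Metric.ball x R) := by rw [hcen x R]
  · -- inf ≤ rhoM
    apply ENNReal.le_of_forall_nnreal_lt
    intro r hr
    rcases eq_or_ne r 0 with h0 | h0
    · simp [h0]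
    have hR0 : (0:ℝ) < (r:ℝ) := NNReal.coe_pos.2 (zero_lt_iff.mpr h0)
    set R := (r:ℝ) with hRdef
    have hcoe : (r : ℝ≥0∞) = ENNReal.ofReal R := (ENNReal.ofReal_coe_nnreal).symm
    have hprop : ∀ ε > (0:ℝ), ∃ x : EuclideanSpace ℝ (Fin n),
        volume (Metric.ball x R ∩ Ωᶜ) < ENNReal.ofReal ε := by
      intro ε hε
      set Ce := (2:ℝ≥0∞)^n * volume (Metric.ball (0:EuclideanSpace ℝ (Fin n)) R) with hCe
      have hCt : Ce ≠ ⊤ :=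
        ENNReal.mul_ne_top (ENNReal.pow_ne_top ENNReal.ofNat_ne_top) measure_ball_lt_top.ne
      have hC0' : Ce ≠ 0 :=
        mul_ne_zero (pow_ne_zero _ (by norm_num)) (Metric.measure_ball_pos volume _ hR0).ne'
      set C := Ce.toReal with hCdef
      have hC0 : 0 < C := ENNReal.toReal_pos hC0' hCt
      set α := min (1/2) (ε / (2*C)) with hαdef
      have hα1 : 0 < α := lt_min (by norm_num) (by positivity)
      have hα2 : α < 1 := lt_of_le_of_lt (min_le_left _ _) (by norm_num)
      have hsmall : ENNReal.ofReal α * Ce < ENNReal.ofReal ε := by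
        rw [← ENNReal.ofReal_toReal hCt, ← hCdef, ← ENNReal.ofReal_mul hα1.le]
        refine (ENNReal.ofReal_lt_ofReal_iff hε).2 ?_
        have h1 : α * C ≤ (ε/(2*C)) * C :=
          mul_le_mul_of_nonneg_right (min_le_right _ _) hC0.le
        have h2 : (ε/(2*C)) * C = ε/2 := by field_simp
        linarith
      have hlt : (r:ℝ≥0∞) < rhoMAlpha n α Ω := hr.trans_le (iInf₂_le α ⟨hα1, hα2⟩)
      unfold rhoMAlpha at hlt
      obtain ⟨R', hlt2⟩ := lt_iSup_iff.mp hlt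
      obtain ⟨hP, hlt3⟩ := lt_iSup_iff.mp hlt2
      obtain ⟨hR'0, x, hx⟩ := hP
      have hRR' : R < R' := by
        rw [hcoe] at hlt3
        exact (ENNReal.ofReal_lt_ofReal_iff_of_nonneg hR0.le).mp hlt3
      exact key_density hn hΩ.measurableSet.compl hR0 hsmall hRR' hx
    rw [hcoe]
    exact le_iSup₂ (f := fun R (_ : 0 < R ∧ ∀ ε > (0 : ℝ), ∃ x : EuclideanSpace ℝ (Fin n),
      volume (Metric.ball x R ∩ Ωᶜ) < ENNReal.ofReal ε) => ENNReal.ofReal R) R ⟨hR0, hprop⟩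
end

section
/- Define, for (θ, x) ∈ ℝ² with cosh x − cos θ > 0, |∇G(θ,x)| = (1/(4π)) · √(sin²θ + sinh²x) / (cosh x − cos θ) (this is the Euclidean norm of the gradient of G(θ,x) = −(1/(4π)) log(cosh x − cos θ)). Then there exists a constant C₄ > 0 such that for all (θ, x) ≠ (0,0) with |x| ≤ 1 and |θ| < π, one has | |∇G(θ,x)| − (1/(2π)) (θ² + x²)^{-1/2} | ≤ C₄. -/
open Real

/-- For `0 ≤ x ≤ 1`, `sinh x ≤ x + (2/9) x³`. -/
lemma aux_sinh_le {x : ℝ} (h0 : 0 ≤ x) (h1 : x ≤ 1) :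
    Real.sinh x ≤ x + (2 / 9) * x ^ 3 := by
  have hb := Real.exp_bound (x := x) (by rwa [abs_of_nonneg h0]) (n := 3) (by norm_num)
  have hb' := Real.exp_bound (x := -x) (by rwa [abs_neg, abs_of_nonneg h0]) (n := 3)
    (by norm_num)
  simp only [Finset.sum_range_succ, Finset.sum_range_zero, Nat.factorial] at hb hb'
  rw [abs_of_nonneg h0] at hb
  rw [abs_neg, abs_of_nonneg h0] at hb' 
  rw [abs_le] at hb hb'
  rw [Real.sinh_eq]
  push_cast at hb hb'
  nlinarith [hb.1, hb.2, hb'.1, hb'.2]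

/-- For `|x| ≤ 1`, `x² ≤ sinh²x ≤ x² + x⁴`. -/
lemma aux_sinh_sq {x : ℝ} (hx : |x| ≤ 1) :
    x ^ 2 ≤ Real.sinh x ^ 2 ∧ Real.sinh x ^ 2 ≤ x ^ 2 + x ^ 4 := by
  have h0 : (0 : ℝ) ≤ |x| := abs_nonneg x
  have hs : Real.sinh |x| ^ 2 = Real.sinh x ^ 2 := by
    rcases abs_cases x with ⟨h, _⟩ | ⟨h, _⟩ <;> rw [h] <;> simp [Real.sinh_neg]
  have hle : |x| ≤ Real.sinh |x| := Real.self_le_sinh_iff.mpr h0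
  have hub : Real.sinh |x| ≤ |x| + (2 / 9) * |x| ^ 3 := aux_sinh_le h0 hx
  have hxx : |x| ^ 2 = x ^ 2 := sq_abs x
  have hsnn : 0 ≤ Real.sinh |x| := le_trans h0 hle
  have hB : Real.sinh |x| ^ 2 ≤ (|x| + 2 / 9 * |x| ^ 3) ^ 2 :=
    pow_le_pow_left₀ hsnn hub 2
  have h46 : |x| ^ 6 ≤ |x| ^ 4 := pow_le_pow_of_le_one (abs_nonneg x) hx (by norm_num)
  have hx4 : |x| ^ 4 = x ^ 4 := by
    rw [show (4:ℕ) = 2 * 2 by norm_num, pow_mul, pow_mul, sq_abs]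
  have hx6 : |x| ^ 6 = x ^ 6 := by
    rw [show (6:ℕ) = 2 * 3 by norm_num, pow_mul, pow_mul, sq_abs]
  constructor
  · nlinarith [hle, hs, hxx]
  · nlinarith [hB, h46, hxx, hx4, hx6, hs]

/-- `x² ≤ 2(cosh x − 1)` for all `x`, and `2(cosh x − 1) ≤ x² + x⁴/8` for `|x| ≤ 2`. -/
lemma aux_cosh {x : ℝ} (hx : |x| ≤ 1) :
    x ^ 2 / 2 ≤ Real.cosh x - 1 ∧ 2 * Real.cosh x - 2 - x ^ 2 ≤ x ^ 4 / 4 := by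
  have hid : Real.cosh x = 1 + 2 * Real.sinh (x / 2) ^ 2 := by
    have := Real.cosh_two_mul (x / 2)
    have h2 : 2 * (x / 2) = x := by ring
    rw [h2] at this
    rw [this, Real.cosh_sq]
    ring
  have hhalf : |x / 2| ≤ 1 := by
    rw [abs_div]
    rw [abs_two]
    linarith [abs_nonneg x]
  obtain ⟨hl, hu⟩ := aux_sinh_sq hhalf
  constructor <;> nlinarith [hl, hu]

/-- Global bound `θ² − sin²θ ≤ 2θ⁴`. -/
lemma aux_sin_sq (θ : ℝ) : θ ^ 2 - Real.sin θ ^ 2 ≤ 2 * θ ^ 4 := by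
  rcases eq_or_ne θ 0 with h | h
  · simp [h]
  rcases le_or_gt (|θ|) 1 with h1 | h1
  · have h0 : 0 < |θ| := abs_pos.mpr h
    have hgt := Real.sin_gt_sub_cube h0
    have hle := Real.sin_le (le_of_lt h0)
    have hs : Real.sin |θ| ^ 2 = Real.sin θ ^ 2 := by
      rcases abs_cases θ with ⟨hh, _⟩ | ⟨hh, _⟩ <;> rw [hh] <;> simp [Real.sin_neg]
    have hxx : |θ| ^ 2 = θ ^ 2 := sq_abs θ
    have hpos : 0 < |θ| - |θ| ^ 3 / 4 := by nlinarith
    nlinarith [hgt, hle, hs, hxx, h0]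
  · have h2 : (1 : ℝ) ≤ θ ^ 2 := by nlinarith [sq_abs θ]
    nlinarith [Real.sin_sq_le_sq (x := θ), sq_nonneg (Real.sin θ), sq_nonneg θ]

/-- `θ² − 2 + 2cos θ ≤ θ⁴/2` for all `θ`, plus lower bound. -/
lemma aux_cos (θ : ℝ) :
    1 - θ ^ 2 / 2 ≤ Real.cos θ ∧ 2 * Real.cos θ - 2 + θ ^ 2 ≤ θ ^ 4 / 2 := by
  refine ⟨Real.one_sub_sq_div_two_le_cos, ?_⟩
  have hid : Real.sin (θ / 2) ^ 2 = 1 / 2 - Real.cos (2 * (θ / 2)) / 2 :=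
    Real.sin_sq_eq_half_sub (θ / 2)
  have h2 : 2 * (θ / 2) = θ := by ring
  rw [h2] at hid
  have := aux_sin_sq (θ / 2)
  nlinarith [this, hid]

set_option maxHeartbeats 1000000 in
/-- Near-diagonal estimate for the gradient of the cylinder Green function
`G(θ,x) = −(1/(4π)) log(cosh x − cos θ)`: there is `C₄ > 0` such that
`| |∇G(θ,x)| − (1/(2π))(θ² + x²)^{-1/2} | ≤ C₄` for `(θ,x) ≠ (0,0)`, `|x| ≤ 1`, `|θ| < π`. -/
theorem cylGreen_gradient_near_diagonal :
    ∃ C₄ > (0 : ℝ), ∀ θ x : ℝ, (θ, x) ≠ ((0 : ℝ), (0 : ℝ)) → |x| ≤ 1 → |θ| < Real.pi →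
      |(1 / (4 * Real.pi)) *
          (Real.sqrt (Real.sin θ ^ 2 + Real.sinh x ^ 2) / (Real.cosh x - Real.cos θ))
        - (1 / (2 * Real.pi)) * (θ ^ 2 + x ^ 2) ^ (-(1 : ℝ) / 2)| ≤ C₄ := by
  refine ⟨15, by norm_num, fun θ x hne hx hθ => ?_⟩
  have hpi := Real.pi_gt_three
  have hpi4 := Real.pi_le_four
  -- positivity of θ² + x²
  have hne' : θ ≠ 0 ∨ x ≠ 0 := by
    by_contra hc
    push_neg at hc
    exact hne (by simp [hc.1, hc.2])
  have hr2pos : 0 < θ ^ 2 + x ^ 2 := by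
    rcases hne' with h | h
    · have : 0 < θ ^ 2 := lt_of_le_of_ne (sq_nonneg θ) (Ne.symm (pow_ne_zero 2 h))
      nlinarith [sq_nonneg x]
    · have : 0 < x ^ 2 := lt_of_le_of_ne (sq_nonneg x) (Ne.symm (pow_ne_zero 2 h))
      nlinarith [sq_nonneg θ]
  set r : ℝ := Real.sqrt (θ ^ 2 + x ^ 2) with hrdef
  have hrpos : 0 < r := Real.sqrt_pos.mpr hr2pos
  have hr2 : r ^ 2 = θ ^ 2 + x ^ 2 := Real.sq_sqrt hr2pos.le
  have hθ2 : θ ^ 2 ≤ Real.pi ^ 2 := by nlinarith [sq_abs θ, abs_nonneg θ, hθ.le]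
  have hx2 : x ^ 2 ≤ 1 := by nlinarith [sq_abs x, abs_nonneg x]
  have hrle : r ≤ Real.pi + 1 := by
    have : r ^ 2 ≤ (Real.pi + 1) ^ 2 := by nlinarith
    nlinarith [hrpos]
  -- set A and D
  set A : ℝ := Real.sqrt (Real.sin θ ^ 2 + Real.sinh x ^ 2) with hAdef
  have hA0 : 0 ≤ A := Real.sqrt_nonneg _
  have hA2 : A ^ 2 = Real.sin θ ^ 2 + Real.sinh x ^ 2 :=
    Real.sq_sqrt (by positivity)
  set D : ℝ := Real.cosh x - Real.cos θ with hDdef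
  -- bounds
  obtain ⟨hsinh1, hsinh2⟩ := aux_sinh_sq hx
  obtain ⟨hcosh1, hcosh2⟩ := aux_cosh hx
  obtain ⟨hcos1, hcos2⟩ := aux_cos θ
  have hsin := aux_sin_sq θ
  have hsin' := Real.sin_sq_le_sq (x := θ)
  -- lower bound on D
  have hjordan : Real.cos θ ≤ 1 - 2 / Real.pi ^ 2 * θ ^ 2 :=
    Real.cos_le_one_sub_mul_cos_sq hθ.le
  have hpisq : (2 : ℝ) ≤ Real.pi ^ 2 := by nlinarith
  have h2θ : 2 * θ ^ 2 ≤ (1 - Real.cos θ) * Real.pi ^ 2 := by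
    have hp2 : (0 : ℝ) < Real.pi ^ 2 := by positivity
    have hm := mul_le_mul_of_nonneg_right hjordan hp2.le
    have he : 2 / Real.pi ^ 2 * θ ^ 2 * Real.pi ^ 2 = 2 * θ ^ 2 := by
      field_simp
    nlinarith [hm, he]
  have hDlow : (θ ^ 2 + x ^ 2) / Real.pi ^ 2 ≤ D := by
    rw [hDdef, div_le_iff₀ (by positivity)]
    nlinarith [h2θ, hcosh1, sq_nonneg θ, sq_nonneg x, hpisq]
  have hDpos : 0 < D := lt_of_lt_of_le (by positivity) hDlow
  -- |A² − r²| ≤ 2θ⁴ + x⁴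
  have hE1 : |A ^ 2 - r ^ 2| ≤ 2 * θ ^ 4 + x ^ 4 := by
    rw [hA2, hr2, abs_le]
    constructor
    · linarith [hsin, hsinh1, sq_nonneg (x^2)]
    · linarith [hsin', hsinh2, sq_nonneg (θ^2)]
  -- |A·r − r²| ≤ |A² − r²|
  have hAr : |A * r - r ^ 2| ≤ |A ^ 2 - r ^ 2| := by
    have h1 : |A * r - r ^ 2| = |A - r| * r := by
      rw [show A * r - r ^ 2 = (A - r) * r by ring, abs_mul, abs_of_pos hrpos]
    have h2 : |A ^ 2 - r ^ 2| = |A - r| * (A + r) := by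
      rw [show A ^ 2 - r ^ 2 = (A - r) * (A + r) by ring, abs_mul,
        abs_of_nonneg (by positivity : (0:ℝ) ≤ A + r)]
    rw [h1, h2]
    have := abs_nonneg (A - r)
    nlinarith
  -- |2D − r²| ≤ θ⁴/2 + x⁴/4
  have hE2 : |2 * D - r ^ 2| ≤ θ ^ 4 / 2 + x ^ 4 / 4 := by
    rw [hDdef, hr2, abs_le]
    constructor
    · linarith [hcosh1, hcos2]
    · linarith [hcosh2, hcos1]
  -- combine: |A·r − 2D| ≤ 3 (θ²+x²)²
  have hkey : |A * r - 2 * D| ≤ 3 * (θ ^ 2 + x ^ 2) ^ 2 := by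
    have htri := abs_sub_le (A * r) (r ^ 2) (2 * D)
    have h3 : |r ^ 2 - 2 * D| = |2 * D - r ^ 2| := abs_sub_comm _ _
    rw [h3] at htri
    have hAE := hAr.trans hE1
    nlinarith [htri, hAE, hE2, mul_nonneg (sq_nonneg θ) (sq_nonneg x)]
  -- rewrite rpow
  have hrpow : (θ ^ 2 + x ^ 2) ^ (-(1 : ℝ) / 2) = r⁻¹ := by
    rw [show (-(1 : ℝ) / 2) = -(1 / 2 : ℝ) by norm_num,
      Real.rpow_neg hr2pos.le, hrdef, Real.sqrt_eq_rpow]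
  rw [hrpow]
  -- rewrite the difference as a single quotient
  have hπ : Real.pi ≠ 0 := by positivity
  have hdiff : (1 / (4 * Real.pi)) * (A / D) - (1 / (2 * Real.pi)) * r⁻¹
      = (A * r - 2 * D) / (4 * Real.pi * D * r) := by
    field_simp
    ring
  have hDr : (0 : ℝ) < D * r := mul_pos hDpos hrpos
  have h4πDr : (0 : ℝ) < 4 * Real.pi * D * r :=
    mul_pos (mul_pos (by positivity : (0:ℝ) < 4 * Real.pi) hDpos) hrpos
  rw [hdiff, abs_div, abs_of_pos h4πDr, div_le_iff₀ h4πDr]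
  have h1 : θ ^ 2 + x ^ 2 ≤ Real.pi ^ 2 * D := by
    rw [div_le_iff₀ (by positivity : (0:ℝ) < Real.pi ^ 2)] at hDlow
    linarith
  have hc : 3 * Real.pi ^ 2 * (Real.pi + 1) ≤ 60 * Real.pi := by nlinarith [hpi, hpi4]
  calc |A * r - 2 * D| ≤ 3 * (θ ^ 2 + x ^ 2) ^ 2 := hkey
    _ = 3 * (θ ^ 2 + x ^ 2) * (θ ^ 2 + x ^ 2) := by ring
    _ ≤ 3 * (θ ^ 2 + x ^ 2) * (Real.pi ^ 2 * D) :=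
        mul_le_mul_of_nonneg_left h1 (by positivity)
    _ = 3 * Real.pi ^ 2 * D * (r * r) := by rw [show r * r = r ^ 2 by ring, hr2]; ring
    _ ≤ 3 * Real.pi ^ 2 * D * ((Real.pi + 1) * r) :=
        mul_le_mul_of_nonneg_left (mul_le_mul_of_nonneg_right hrle hrpos.le)
          (mul_nonneg (by positivity : (0:ℝ) ≤ 3 * Real.pi ^ 2) hDpos.le)
    _ = 3 * Real.pi ^ 2 * (Real.pi + 1) * (D * r) := by ring
    _ ≤ 60 * Real.pi * (D * r) := mul_le_mul_of_nonneg_right hc hDr.le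
    _ = 15 * (4 * Real.pi * D * r) := by ring
end
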